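/- For every prime p and integer q ≥ 1, Σ_{k=1}^{p-1} ⌊k^(2q+1)/p⌋ = (B_{2q+2}(p+1) - B_{2q+2}(1))/(2p(2q+2)) + (B_{2q+2}(p) - B_{2q+2}(0))/(2p(2q+2)) - (p^{2q} + p - 1)/2. -/

import Mathlib

/-!
Write `m = 2q + 1` and `S = ∑_{k<p} k^m`. Since `⌊k^m/p⌋ = (k^m - (k^m mod p))/p`, the left side is
`(S - ∑ (k^m mod p))/p`. For `0 < k < p` the residues of `k^m` and `(p - k)^m ≡ -k^m` are nonzero and
add up to `p`, so pairing `k` with `p - k` gives `∑ (k^m mod p) = p(p - 1)/2`. On the right, Faulhaber's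
formula `(m + 1) ∑_{k<n} k^m = B_{m+1}(n) - B_{m+1}` evaluates both Bernoulli differences in terms of `S`.
-/

open Finset

theorem Nat.mod_add_mod_eq_self_of_dvd_add {a b p : ℕ} (h : p ∣ a + b) (ha : ¬p ∣ a) :
    a % p + b % p = p := by
  have hpos : 0 < p := Nat.pos_of_ne_zero (by rintro rfl; simp_all)
  refine Nat.eq_of_dvd_of_lt_two_mul ?_ ?_ ?_
  · have := (Nat.dvd_iff_mod_eq_zero).not.mp ha; omega
  · rw [Nat.dvd_iff_mod_eq_zero, ← Nat.add_mod, ← Nat.dvd_iff_mod_eq_zero]; exact h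
  · have := Nat.mod_lt a hpos; have := Nat.mod_lt b hpos; omega

theorem Rat.floor_natCast_div_natCast_eq (n d : ℕ) :
    (⌊(n : ℚ) / d⌋ : ℚ) = ((n : ℚ) - (n % d : ℕ)) / d := by
  rcases Nat.eq_zero_or_pos d with rfl | hd
  · simp
  rw [Rat.floor_natCast_div_natCast, ← Int.natCast_div, Int.cast_natCast, eq_div_iff (by positivity),
    eq_sub_iff_add_eq]
  exact_mod_cast Nat.div_add_mod' n d

theorem Nat.Prime.pow_mod_add_sub_pow_mod {p m k : ℕ} (hp : p.Prime) (hm : Odd m) (hk : 0 < k)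
    (hkp : k < p) : k ^ m % p + (p - k) ^ m % p = p :=
  Nat.mod_add_mod_eq_self_of_dvd_add
    (by simpa [Nat.add_sub_cancel' hkp.le] using hm.nat_add_dvd_pow_add_pow k (p - k))
    fun h => Nat.not_dvd_of_pos_of_lt hk hkp (hp.dvd_of_dvd_pow h)

theorem Nat.Prime.two_mul_sum_pow_mod {p m : ℕ} (hp : p.Prime) (hm : Odd m) :
    2 * ∑ k ∈ Icc 1 (p - 1), k ^ m % p = p * (p - 1) := by
  have hreflect : ∑ k ∈ Icc 1 (p - 1), (p - k) ^ m % p = ∑ k ∈ Icc 1 (p - 1), k ^ m % p :=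
    sum_nbij' (p - ·) (p - ·) (by simp; omega) (by simp; omega) (by simp; omega) (by simp; omega)
      fun _ _ => rfl
  calc 2 * ∑ k ∈ Icc 1 (p - 1), k ^ m % p
      = ∑ k ∈ Icc 1 (p - 1), (k ^ m % p + (p - k) ^ m % p) := by
        rw [sum_add_distrib, hreflect, two_mul]
    _ = ∑ _k ∈ Icc 1 (p - 1), p := sum_congr rfl fun k hk => by
        rw [mem_Icc] at hk
        exact hp.pow_mod_add_sub_pow_mod hm (by omega) (by omega)
    _ = p * (p - 1) := by simp [mul_comm]

theorem Nat.Prime.sum_floor_pow_div {p m : ℕ} (hp : p.Prime) (hm : Odd m) :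
    ∑ k ∈ Icc 1 (p - 1), (⌊(k : ℚ) ^ m / p⌋ : ℚ) = (∑ k ∈ range p, (k : ℚ) ^ m) / p - (p - 1) / 2 := by
  have hterm (k : ℕ) : (⌊(k : ℚ) ^ m / p⌋ : ℚ) = ((k : ℚ) ^ m - (k ^ m % p : ℕ)) / p := by
    exact_mod_cast Rat.floor_natCast_div_natCast_eq (k ^ m) p
  have hres : ∑ k ∈ Icc 1 (p - 1), ((k ^ m % p : ℕ) : ℚ) = p * (p - 1) / 2 := by
    have := congrArg (Nat.cast (R := ℚ)) (hp.two_mul_sum_pow_mod hm)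
    push_cast [Nat.cast_sub hp.one_le] at this
    linarith
  have hpow : ∑ k ∈ Icc 1 (p - 1), (k : ℚ) ^ m = ∑ k ∈ range p, (k : ℚ) ^ m := by
    rw [sum_range_eq_add_Ico _ hp.pos,
      Icc_sub_one_right_eq_Ico_of_not_isMin (by simpa using hp.ne_zero)]
    simp [hm.pos.ne']
  rw [sum_congr rfl fun k _ => hterm k, ← sum_div, sum_sub_distrib, hres, hpow]
  field_simp [hp.ne_zero]

theorem stmt_17_general (p q : ℕ) (hp : p.Prime) :
    (∑ k ∈ Finset.Icc 1 (p - 1), (⌊((k : ℚ) ^ (2 * q + 1)) / p⌋ : ℚ)) =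
      ((Polynomial.bernoulli (2 * q + 2)).eval ((p : ℚ) + 1) -
        (Polynomial.bernoulli (2 * q + 2)).eval (1 : ℚ)) / (2 * p * (2 * q + 2)) +
      ((Polynomial.bernoulli (2 * q + 2)).eval (p : ℚ) -
        (Polynomial.bernoulli (2 * q + 2)).eval (0 : ℚ)) / (2 * p * (2 * q + 2)) -
      ((p : ℚ) ^ (2 * q) + p - 1) / 2 := by
  set m := 2 * q + 1
  have hm : Odd m := odd_two_mul_add_one q
  have hfaulhaber (n : ℕ) := Polynomial.sum_range_pow_eq_bernoulli_sub n m
  have hB1 : (Polynomial.bernoulli (2 * q + 2)).eval (1 : ℚ) = bernoulli (2 * q + 2) := by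
    simpa [hm.pos.ne', eq_comm, sub_eq_zero] using hfaulhaber 1
  have hBp1 := hfaulhaber (p + 1)
  rw [sum_range_succ] at hBp1
  rw [hp.sum_floor_pow_div hm, Polynomial.bernoulli_eval_zero, hB1, ← hfaulhaber p]
  push_cast at hBp1
  rw [← hBp1]
  field_simp [hp.ne_zero]
  simp only [m]
  push_cast
  ring

theorem stmt_17 (p q : ℕ) (hp : p.Prime) (hq : 1 ≤ q) :
    (∑ k ∈ Finset.Icc 1 (p - 1), (⌊((k : ℚ) ^ (2 * q + 1)) / p⌋ : ℚ)) =
      ((Polynomial.bernoulli (2 * q + 2)).eval ((p : ℚ) + 1) -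
        (Polynomial.bernoulli (2 * q + 2)).eval (1 : ℚ)) / (2 * p * (2 * q + 2)) +
      ((Polynomial.bernoulli (2 * q + 2)).eval (p : ℚ) -
        (Polynomial.bernoulli (2 * q + 2)).eval (0 : ℚ)) / (2 * p * (2 * q + 2)) -
      ((p : ℚ) ^ (2 * q) + p - 1) / 2 :=
  stmt_17_general p q hp
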